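/- Let ω ∈ {0,1}^ℕ be an aperiodic infinite binary word. Then the abelian complexity of ω satisfies ρ^ab_ω(n) = 2 for all odd n and ρ^ab_ω(n) = 3 for all even n ≥ 2, if and only if there exists an infinite binary word ω' such that ω = μ(ω'), ω = 0μ(ω'), or ω = 1μ(ω'), where μ is the Thue-Morse morphism defined by μ(0) = 01 and μ(1) = 10. -/

import Mathlib

/-- The factor of the infinite word `ω` of length `n` starting at position `i`. -/
def factor {A : Type*} (ω : ℕ → A) (i n : ℕ) : List A :=
  (List.range n).map fun j => ω (i + j)

/-- The abelian complexity of `ω`: the number of abelian equivalence classes of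
factors of `ω` of length `n`. -/
noncomputable def abelianComplexity {A : Type*} [DecidableEq A] (ω : ℕ → A) (n : ℕ) : ℕ :=
  Set.ncard {c : A → ℕ | ∃ i : ℕ, c = fun a => (factor ω i n).count a}

/-- `ω` is ultimately periodic. -/
def UltimatelyPeriodic {A : Type*} (ω : ℕ → A) : Prop :=
  ∃ m p : ℕ, 0 < p ∧ ∀ n : ℕ, m ≤ n → ω (n + p) = ω n

/-- The image of the infinite word `ω'` under the Thue-Morse morphism
`μ(0) = 01`, `μ(1) = 10`. -/
def muWord (ω' : ℕ → Fin 2) : ℕ → Fin 2 :=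
  fun n => if n % 2 = 0 then ω' (n / 2) else 1 - ω' (n / 2)

/-!
For a binary word the abelian class of a factor is determined by its weight, the number of `1`s
in it. If `ω` is `μ(ω')` after a prefix of length `p ≤ 1`, a factor of even length starting at a
block boundary has weight exactly half its length; hence factors of length `2k + 1` have weight
`k` or `k + 1`, and factors of length `2k + 2` weight `k`, `k + 1` or `k + 2`, and aperiodicity
of `ω'` makes every one of these values occur.

Conversely, `ρ(2) = 3` forces both squares `00` and `11` to occur. A square `aa` at `i` and a
square `bb ≠ aa` at `i + n` make the weights of the length-`n` factors at `i`, `i + 1`, `i + 2`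
strictly monotone, so `ρ(n) = 2` for odd `n` puts all squares at positions of one parity. Cutting
`ω` into blocks of length two starting at the other parity, every block is `01` or `10`.
-/

open Finset

theorem ultimatelyPeriodic_of_le_add {α : Type*} [PartialOrder α] [WellFoundedGT α]
    {ν : ℕ → α} {e : ℕ} (he : 0 < e) (h : ∀ m, ν m ≤ ν (m + e)) : UltimatelyPeriodic ν := by
  have hmono (r : ℕ) : Monotone fun t => ν (t * e + r) :=
    monotone_nat_of_le_succ fun t => by simpa [add_mul, add_right_comm] using h (t * e + r)
  choose N hN using fun r => WellFoundedGT.monotone_chain_condition ⟨_, hmono r⟩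
  refine ⟨(range e).sup N * e, e, he, fun n hn => ?_⟩
  have hdiv : N (n % e) ≤ n / e :=
    (le_sup (mem_range.2 (Nat.mod_lt n he))).trans ((Nat.le_div_iff_mul_le he).2 hn)
  have hstable := (hN (n % e) _ hdiv).symm.trans (hN (n % e) _ (hdiv.trans (n / e).le_succ))
  simp only [OrderHom.coe_mk] at hstable
  rwa [Nat.succ_mul, add_right_comm, Nat.div_add_mod', eq_comm] at hstable

theorem exists_eq_and_ne_of_not_ultimatelyPeriodic {ν : ℕ → Fin 2}
    (hν : ¬ UltimatelyPeriodic ν) {e : ℕ} (he : 0 < e) (a : Fin 2) :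
    ∃ m, ν m = a ∧ ν (m + e) ≠ a := by
  by_contra! h
  obtain rfl | rfl : a = 0 ∨ a = 1 := by omega
  · refine hν (ultimatelyPeriodic_of_le_add (α := (Fin 2)ᵒᵈ) he fun m => ?_)
    change ν (m + e) ≤ ν m
    have := h m
    omega
  · refine hν (ultimatelyPeriodic_of_le_add he fun m => ?_)
    have := h m
    omega

lemma UltimatelyPeriodic.muWord {ω' : ℕ → Fin 2} (h : UltimatelyPeriodic ω') :
    UltimatelyPeriodic (muWord ω') := by
  obtain ⟨M, q, hq, hper⟩ := h
  refine ⟨2 * M, 2 * q, by omega, fun n hn => ?_⟩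
  simp only [_root_.muWord, show (n + 2 * q) % 2 = n % 2 by omega,
    show (n + 2 * q) / 2 = n / 2 + q by omega, hper (n / 2) (by omega)]

lemma UltimatelyPeriodic.of_eq_shift {A : Type*} {ω ν : ℕ → A} {p : ℕ}
    (h : UltimatelyPeriodic ν) (hω : ∀ n, p ≤ n → ω n = ν (n - p)) : UltimatelyPeriodic ω := by
  obtain ⟨M, q, hq, hper⟩ := h
  refine ⟨M + p, q, hq, fun n hn => ?_⟩
  rw [hω n (by omega), hω (n + q) (by omega), Nat.sub_add_comm (by omega), hper _ (by omega)]

namespace ThueMorse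

def weight (ω : ℕ → Fin 2) (i n : ℕ) : ℕ := ∑ j ∈ range n, (ω (i + j) : ℕ)

section Weight

variable (ω : ℕ → Fin 2)

lemma weight_add (i m n : ℕ) : weight ω i (m + n) = weight ω i m + weight ω (i + m) n := by
  simp only [weight, sum_range_add, add_assoc]

lemma weight_one (i : ℕ) : weight ω i 1 = ω i := by simp [weight]

lemma weight_two (i : ℕ) : weight ω i 2 = ω i + ω (i + 1) := by
  simp [weight, sum_range_succ]

lemma weight_succ (i n : ℕ) : weight ω i (n + 1) = weight ω i n + ω (i + n) := by
  rw [weight_add, weight_one]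

lemma weight_succ' (i n : ℕ) : weight ω i (n + 1) = ω i + weight ω (i + 1) n := by
  rw [add_comm n, weight_add, weight_one]

lemma weight_le (i n : ℕ) : weight ω i n ≤ n := by
  simpa [weight] using sum_le_sum fun j (_ : j ∈ range n) => Nat.le_of_lt_succ (ω (i + j)).isLt

lemma weight_succ_add_eq (i n : ℕ) :
    weight ω (i + 1) n + ω i = weight ω i n + ω (i + n) := by
  rw [add_comm, ← weight_succ', weight_succ]

lemma count_factor (i n : ℕ) :
    (fun a => (factor ω i n).count a) = ![n - weight ω i n, weight ω i n] := by
  suffices h : (factor ω i n).count 1 = weight ω i n ∧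
      (factor ω i n).count 0 + weight ω i n = n by
    funext a
    fin_cases a
    · simp only [Fin.zero_eta, Matrix.cons_val_zero]
      omega
    · exact h.1
  induction n with
  | zero => simp [factor, weight]
  | succ n ih =>
    simp only [factor, List.range_succ, List.map_append, List.map_singleton, List.count_append,
      List.count_singleton, beq_iff_eq] at ih ⊢
    rw [weight_succ]
    split_ifs <;> omega

theorem abelianComplexity_eq_ncard_range_weight (n : ℕ) :
    abelianComplexity ω n = (Set.range fun i => weight ω i n).ncard := by
  have hinj : Function.Injective fun w : ℕ => ![n - w, w] := fun w w' h => congrFun h 1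
  rw [abelianComplexity, ← Set.ncard_image_of_injective _ hinj, ← Set.range_comp]
  congr 1
  ext c
  simp [count_factor, eq_comm]

end Weight

lemma finite_range_weight (ω : ℕ → Fin 2) (n : ℕ) : (Set.range fun i => weight ω i n).Finite :=
  (Set.finite_Iic n).subset (Set.range_subset_iff.2 fun i => weight_le ω i n)

section Squares

variable {ω : ℕ → Fin 2}

lemma three_le_abelianComplexity_of_squares {i n : ℕ} (hi : ω (i + 1) = ω i)
    (hin : ω (i + n + 1) = ω (i + n)) (hne : ω i ≠ ω (i + n)) : 3 ≤ abelianComplexity ω n := by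
  have h₁ := weight_succ_add_eq ω i n
  have h₂ := weight_succ_add_eq ω (i + 1) n
  rw [hi, add_right_comm i 1 n, hin] at h₂
  rw [abelianComplexity_eq_ncard_range_weight]
  calc 3 = ({weight ω i n, weight ω (i + 1) n, weight ω (i + 1 + 1) n} : Set ℕ).ncard :=
        (Set.ncard_eq_three.2 ⟨_, _, _, by omega, by omega, by omega, rfl⟩).symm
    _ ≤ _ := Set.ncard_le_ncard (by rintro _ (rfl | rfl | rfl) <;> exact ⟨_, rfl⟩)
        (finite_range_weight ω n)

lemma mod_two_eq_of_squares (hodd : ∀ n, Odd n → abelianComplexity ω n = 2) {i j : ℕ}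
    (hi : ω (i + 1) = ω i) (hj : ω (j + 1) = ω j) (hne : ω i ≠ ω j) : i % 2 = j % 2 := by
  wlog hij : i ≤ j generalizing i j
  · exact (this hj hi (Ne.symm hne) (by omega)).symm
  obtain ⟨n, rfl⟩ := Nat.exists_eq_add_of_le hij
  by_contra hpar
  have := three_le_abelianComplexity_of_squares hi hj hne
  rw [hodd n (Nat.odd_iff.2 (by omega))] at this
  omega

lemma exists_squares_of_abelianComplexity_two (h : abelianComplexity ω 2 = 3) :
    ∃ i j, ω (i + 1) = ω i ∧ ω (j + 1) = ω j ∧ ω i ≠ ω j := by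
  rw [abelianComplexity_eq_ncard_range_weight] at h
  have hrange : Set.range (fun i => weight ω i 2) = {0, 1, 2} :=
    Set.eq_of_subset_of_ncard_le
      (Set.range_subset_iff.2 fun i => by
        have := weight_le ω i 2
        simp only [Set.mem_insert_iff, Set.mem_singleton_iff]
        omega)
      (by simp [h]) (Set.toFinite _)
  obtain ⟨i, hi⟩ : 0 ∈ Set.range (fun i => weight ω i 2) := by simp [hrange]
  obtain ⟨j, hj⟩ : 2 ∈ Set.range (fun i => weight ω i 2) := by simp [hrange]
  simp only [weight_two] at hi hj
  exact ⟨i, j, by omega, by omega, by omega⟩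

lemma eq_muWord_sub_of_ne_succ {p : ℕ} (h : ∀ q, q % 2 = p % 2 → ω (q + 1) ≠ ω q) (n : ℕ)
    (hn : p ≤ n) : ω n = muWord (fun m => ω (2 * m + p)) (n - p) := by
  simp only [muWord]
  split_ifs with hpar
  · congr 1
    omega
  · have := h (2 * ((n - p) / 2) + p) (by omega)
    rw [show 2 * ((n - p) / 2) + p + 1 = n by omega] at this
    omega

theorem exists_eq_muWord_sub_of_abelianComplexity
    (hodd : ∀ n, Odd n → abelianComplexity ω n = 2) (h2 : abelianComplexity ω 2 = 3) :
    ∃ p ≤ 1, ∃ ω' : ℕ → Fin 2, ∀ n, p ≤ n → ω n = muWord ω' (n - p) := by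
  obtain ⟨i, j, hi, hj, hne⟩ := exists_squares_of_abelianComplexity_two h2
  have hij := mod_two_eq_of_squares hodd hi hj hne
  refine ⟨(i + 1) % 2, by omega, _, eq_muWord_sub_of_ne_succ fun q hq hq' => ?_⟩
  by_cases hqi : ω q = ω i
  · have := mod_two_eq_of_squares hodd hq' hj (hqi ▸ hne)
    omega
  · have := mod_two_eq_of_squares hodd hq' hi hqi
    omega

end Squares

section MuWordTail

variable {ω ω' : ℕ → Fin 2} {p : ℕ}

lemma apply_two_mul_add (hω : ∀ n, p ≤ n → ω n = muWord ω' (n - p)) (m : ℕ) :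
    ω (2 * m + p) = ω' m := by
  simp [hω _ le_add_self, muWord]

lemma apply_two_mul_add_add_one (hω : ∀ n, p ≤ n → ω n = muWord ω' (n - p)) (m : ℕ) :
    ω (2 * m + p + 1) = 1 - ω' m := by
  rw [hω _ (by omega), muWord, if_neg (by omega), show (2 * m + p + 1 - p) / 2 = m by omega]

lemma weight_two_mul_of_mod (hp : p ≤ 1) (hω : ∀ n, p ≤ n → ω n = muWord ω' (n - p))
    {i : ℕ} (hi : i % 2 = p) (k : ℕ) : weight ω i (2 * k) = k := by
  induction k with
  | zero => simp [weight]
  | succ k ih =>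
    obtain ⟨m, hm⟩ : ∃ m, i + 2 * k = 2 * m + p := ⟨(i + 2 * k) / 2, by omega⟩
    rw [mul_add_one, weight_add, ih, weight_two, hm, apply_two_mul_add hω,
      apply_two_mul_add_add_one hω]
    omega

lemma weight_odd_mem (hp : p ≤ 1) (hω : ∀ n, p ≤ n → ω n = muWord ω' (n - p)) (k i : ℕ) :
    weight ω i (2 * k + 1) ∈ Set.Icc k (k + 1) := by
  by_cases hi : i % 2 = p
  · rw [weight_succ, weight_two_mul_of_mod hp hω hi]
    exact ⟨by omega, by omega⟩
  · rw [weight_succ', weight_two_mul_of_mod hp hω (i := i + 1) (by omega)]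
    exact ⟨by omega, by omega⟩

lemma weight_even_mem (hp : p ≤ 1) (hω : ∀ n, p ≤ n → ω n = muWord ω' (n - p)) (k i : ℕ) :
    weight ω i (2 * k + 2) ∈ Set.Icc k (k + 2) := by
  by_cases hi : i % 2 = p
  · rw [← mul_add_one, weight_two_mul_of_mod hp hω hi]
    exact ⟨by omega, by omega⟩
  · rw [weight_succ', weight_succ, weight_two_mul_of_mod hp hω (i := i + 1) (by omega)]
    exact ⟨by omega, by omega⟩

lemma weight_odd_add_apply (hp : p ≤ 1) (hω : ∀ n, p ≤ n → ω n = muWord ω' (n - p))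
    (m k : ℕ) : weight ω (2 * m + p + 1) (2 * k + 1) + ω' m = k + 1 := by
  rw [weight_succ', weight_two_mul_of_mod hp hω (by omega), apply_two_mul_add_add_one hω]
  omega

lemma weight_even_add_apply (hp : p ≤ 1) (hω : ∀ n, p ≤ n → ω n = muWord ω' (n - p))
    (m k : ℕ) : weight ω (2 * m + p + 1) (2 * k + 2) + ω' m = k + 1 + ω' (m + (k + 1)) := by
  rw [weight_succ', weight_succ, weight_two_mul_of_mod hp hω (by omega),
    apply_two_mul_add_add_one hω, show 2 * m + p + 1 + 1 + 2 * k = 2 * (m + (k + 1)) + p by ring,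
    apply_two_mul_add hω]
  omega

lemma range_weight_odd (hω' : ¬ UltimatelyPeriodic ω') (hp : p ≤ 1)
    (hω : ∀ n, p ≤ n → ω n = muWord ω' (n - p)) (k : ℕ) :
    Set.range (fun i => weight ω i (2 * k + 1)) = Set.Icc k (k + 1) := by
  refine (Set.range_subset_iff.2 (weight_odd_mem hp hω k)).antisymm fun w hw => ?_
  obtain ⟨m, hm, -⟩ := exists_eq_and_ne_of_not_ultimatelyPeriodic hω' one_pos
    (if w = k then 1 else 0)
  have := weight_odd_add_apply hp hω m k
  simp only [Set.mem_Icc] at hw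
  refine ⟨2 * m + p + 1, ?_⟩
  dsimp only
  split_ifs at hm <;> omega

lemma range_weight_even (hω' : ¬ UltimatelyPeriodic ω') (hp : p ≤ 1)
    (hω : ∀ n, p ≤ n → ω n = muWord ω' (n - p)) (k : ℕ) :
    Set.range (fun i => weight ω i (2 * k + 2)) = Set.Icc k (k + 2) := by
  refine (Set.range_subset_iff.2 (weight_even_mem hp hω k)).antisymm fun w hw => ?_
  simp only [Set.mem_Icc] at hw
  by_cases hmid : w = k + 1
  · refine ⟨p, ?_⟩
    dsimp only
    rw [← mul_add_one, weight_two_mul_of_mod hp hω (Nat.mod_eq_of_lt (by omega)), hmid]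
  obtain ⟨m, hm, hm'⟩ := exists_eq_and_ne_of_not_ultimatelyPeriodic hω' k.add_one_pos
    (if w = k then 1 else 0)
  have := weight_even_add_apply hp hω m k
  refine ⟨2 * m + p + 1, ?_⟩
  dsimp only
  split_ifs at hm hm' <;> omega

theorem abelianComplexity_of_eq_muWord_sub (hap : ¬ UltimatelyPeriodic ω) (hp : p ≤ 1)
    (hω : ∀ n, p ≤ n → ω n = muWord ω' (n - p)) :
    (∀ n, Odd n → abelianComplexity ω n = 2) ∧
      (∀ n, Even n → 2 ≤ n → abelianComplexity ω n = 3) := by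
  have hω' : ¬ UltimatelyPeriodic ω' := fun h => hap (h.muWord.of_eq_shift hω)
  refine ⟨fun n hn => ?_, fun n hn h2 => ?_⟩
  · obtain ⟨k, rfl⟩ := hn
    rw [abelianComplexity_eq_ncard_range_weight, range_weight_odd hω' hp hω, Set.ncard_Icc_nat]
    omega
  · obtain ⟨k, rfl⟩ : ∃ k, n = 2 * k + 2 := ⟨n / 2 - 1, by rcases hn with ⟨r, rfl⟩; omega⟩
    rw [abelianComplexity_eq_ncard_range_weight, range_weight_even hω' hp hω, Set.ncard_Icc_nat]
    omega

end MuWordTail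

lemma exists_eq_muWord_iff (ω : ℕ → Fin 2) :
    (∃ ω' : ℕ → Fin 2,
      ω = muWord ω' ∨
      ω = (fun n => if n = 0 then (0 : Fin 2) else muWord ω' (n - 1)) ∨
      ω = (fun n => if n = 0 then (1 : Fin 2) else muWord ω' (n - 1))) ↔
    ∃ p ≤ 1, ∃ ω' : ℕ → Fin 2, ∀ n, p ≤ n → ω n = muWord ω' (n - p) := by
  constructor
  · rintro ⟨ω', rfl | rfl | rfl⟩
    · exact ⟨0, zero_le_one, ω', fun n _ => rfl⟩
    all_goals exact ⟨1, le_rfl, ω', fun n hn => if_neg (by omega)⟩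
  · rintro ⟨p, hp, ω', hω⟩
    refine ⟨ω', ?_⟩
    obtain rfl | rfl : p = 0 ∨ p = 1 := by omega
    · exact Or.inl (funext fun n => hω n n.zero_le)
    have hshape : ω = fun n => if n = 0 then ω 0 else muWord ω' (n - 1) := by
      funext n
      split_ifs with hn
      · rw [hn]
      · exact hω n (by omega)
    obtain h0 | h0 : ω 0 = 0 ∨ ω 0 = 1 := by omega
    · exact Or.inr (Or.inl (h0 ▸ hshape))
    · exact Or.inr (Or.inr (h0 ▸ hshape))

end ThueMorse

/-- An aperiodic binary word `ω` has abelian complexity `2` at odd lengths and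
`3` at even lengths `≥ 2` iff `ω = μ(ω')`, `ω = 0μ(ω')` or `ω = 1μ(ω')`
for some infinite binary word `ω'`. -/
theorem abelianComplexity_TM_characterization
    (ω : ℕ → Fin 2) (hap : ¬ UltimatelyPeriodic ω) :
    ((∀ n : ℕ, Odd n → abelianComplexity ω n = 2) ∧
     (∀ n : ℕ, Even n → 2 ≤ n → abelianComplexity ω n = 3)) ↔
    (∃ ω' : ℕ → Fin 2,
      ω = muWord ω' ∨
      ω = (fun n => if n = 0 then (0 : Fin 2) else muWord ω' (n - 1)) ∨
      ω = (fun n => if n = 0 then (1 : Fin 2) else muWord ω' (n - 1))) := by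
  rw [ThueMorse.exists_eq_muWord_iff]
  constructor
  · rintro ⟨hodd, heven⟩
    exact ThueMorse.exists_eq_muWord_sub_of_abelianComplexity hodd (heven 2 even_two le_rfl)
  · rintro ⟨p, hp, ω', hω⟩
    exact ThueMorse.abelianComplexity_of_eq_muWord_sub hap hp hω
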